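/- Fix a ∈ [0.9, 1] and ε with 0 < ε < 0.05 and a/2 + 4√ε ≤ 1/2, and let F₂ₐ be the perturbed CDF defined piecewise from G(x) = (3x−1)(x+1)/(3x²) (equal to G(x) − ε + (1/2)(x − a/2 − 2√ε)² for a/2 + √ε < x ≤ a/2 + 3√ε). Let b = a/2 + 2√ε. Then F₂ₐ(b) = G(b) − ε, and b·(1 − (b/(b+1))·F₂ₐ(b)) = 1/3 + ε·b²/(b+1). In particular, the two-buyer revenue at price b under the pair of CDFs (F₁₀, F₂ₐ), where F₁₀(x) = 1 − 1/(x+1) on [0,1/2], exceeds 1/3 by exactly ε·b²/(b+1). -/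

import Mathlib

open Set

/-- The baseline CDF piece `G(x) = (3x−1)(x+1)/(3x²)`. -/
noncomputable def G23 : ℝ → ℝ := fun x => (3*x - 1)*(x + 1)/(3*x^2)

/-- The perturbed CDF `F₂ₐ`, a piecewise modification of `G23` on `[a/2, a/2 + 4√ε]`. -/
noncomputable def F2A (a ε : ℝ) : ℝ → ℝ := fun x =>
  if x ≤ a/2 then G23 x
  else if x ≤ a/2 + Real.sqrt ε then G23 x - (1/2)*(x - a/2)^2
  else if x ≤ a/2 + 3*Real.sqrt ε then G23 x - ε + (1/2)*(x - a/2 - 2*Real.sqrt ε)^2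
  else if x ≤ a/2 + 4*Real.sqrt ε then G23 x - (1/2)*(x - a/2 - 4*Real.sqrt ε)^2
  else G23 x

/-- The first buyer's baseline CDF on `[0, 1/2]`. -/
noncomputable def F₁₀ : ℝ → ℝ := fun x => 1 - 1/(x+1)

lemma F₁₀_eq_div {x : ℝ} (hx : x + 1 ≠ 0) : F₁₀ x = x / (x + 1) := by
  simp only [F₁₀]
  field_simp
  ring

lemma F2A_of_mem_Ioc {a ε x : ℝ}
    (hx : x ∈ Ioc (a/2 + Real.sqrt ε) (a/2 + 3*Real.sqrt ε)) :
    F2A a ε x = G23 x - ε + (1/2)*(x - a/2 - 2*Real.sqrt ε)^2 := by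
  have hs := Real.sqrt_nonneg ε
  simp only [F2A]
  rw [if_neg (by linarith [hx.1]), if_neg (not_le.2 hx.1), if_pos hx.2]

lemma F2A_midpoint {a ε : ℝ} (hε : 0 < ε) :
    F2A a ε (a/2 + 2*Real.sqrt ε) = G23 (a/2 + 2*Real.sqrt ε) - ε := by
  have hs := Real.sqrt_pos.2 hε
  rw [F2A_of_mem_Ioc ⟨by linarith, by linarith⟩]
  ring

/-- `G23` is exactly the equal-revenue profile: against `F₁₀` every price `x` earns `1/3`. -/
lemma mul_one_sub_div_mul_G23 {x : ℝ} (hx : x ≠ 0) (hx1 : x + 1 ≠ 0) :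
    x * (1 - x / (x + 1) * G23 x) = 1/3 := by
  simp only [G23]
  field_simp
  ring

lemma mul_one_sub_div_mul_G23_sub {x : ℝ} (hx : x ≠ 0) (hx1 : x + 1 ≠ 0) (ε : ℝ) :
    x * (1 - x / (x + 1) * (G23 x - ε)) = 1/3 + ε * x^2 / (x + 1) := by
  calc x * (1 - x / (x + 1) * (G23 x - ε))
      = x * (1 - x / (x + 1) * G23 x) + ε * x^2 / (x + 1) := by ring
    _ = 1/3 + ε * x^2 / (x + 1) := by rw [mul_one_sub_div_mul_G23 hx hx1]

theorem stmt4_general (a ε : ℝ) (ha : a ∈ Icc (0.9 : ℝ) 1) (hε : 0 < ε)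
    (b : ℝ) (hb : b = a/2 + 2*Real.sqrt ε) :
    F2A a ε b = G23 b - ε ∧
    b * (1 - (b/(b+1)) * F2A a ε b) = 1/3 + ε * b^2/(b+1) ∧
    b * (1 - F₁₀ b * F2A a ε b) = 1/3 + ε * b^2/(b+1) := by
  have hb_pos : 0 < b := by
    rw [hb]
    linarith [ha.1, Real.sqrt_nonneg ε]
  have hF2A : F2A a ε b = G23 b - ε := hb ▸ F2A_midpoint hε
  have hrev := mul_one_sub_div_mul_G23_sub hb_pos.ne' (by linarith) ε
  refine ⟨hF2A, ?_, ?_⟩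
  · rwa [hF2A]
  · rwa [hF2A, F₁₀_eq_div (by linarith)]

theorem stmt4 (a ε : ℝ) (ha : a ∈ Icc (0.9 : ℝ) 1) (hε : 0 < ε) (hε' : ε < 0.05)
    (hfit : a/2 + 4*Real.sqrt ε ≤ 1/2) (b : ℝ) (hb : b = a/2 + 2*Real.sqrt ε) :
    F2A a ε b = G23 b - ε ∧
    b * (1 - (b/(b+1)) * F2A a ε b) = 1/3 + ε * b^2/(b+1) ∧
    b * (1 - F₁₀ b * F2A a ε b) = 1/3 + ε * b^2/(b+1) :=
  stmt4_general a ε ha hε b hb
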